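/- arXiv:0909.5347 — 5 statements merged into one kernel-verified Lean document; each statement's English description precedes it below -/
import Mathlib

section
/- If the span S_n(A) of products of exactly n Kraus operators of a quantum channel E_A equals all of M_D(ℂ), then for every unit vector φ ∈ ℂ^D the operator E_A^n(|φ⟩⟨φ|) has full rank; consequently q(E_A) ≤ i(A). -/
open Matrix
open scoped ComplexOrder

variable {D : ℕ} {ι : Type*} [Fintype ι]

/-- The completely positive map with Kraus operators `A k`. -/
noncomputable def krausMap (A : ι → Matrix (Fin D) (Fin D) ℂ)
    (X : Matrix (Fin D) (Fin D) ℂ) : Matrix (Fin D) (Fin D) ℂ :=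
  ∑ k, A k * X * (A k)ᴴ

/-- The product `A_{w 0} * A_{w 1} * ⋯ * A_{w (n-1)}` of Kraus operators along a word `w`. -/
noncomputable def wordProd (A : ι → Matrix (Fin D) (Fin D) ℂ) {n : ℕ} (w : Fin n → ι) :
    Matrix (Fin D) (Fin D) ℂ :=
  (List.ofFn fun i => A (w i)).prod

/-- `S_n(A)`: the span of all products of exactly `n` Kraus operators. -/
noncomputable def krausSpan (A : ι → Matrix (Fin D) (Fin D) ℂ) (n : ℕ) :
    Submodule ℂ (Matrix (Fin D) (Fin D) ℂ) :=
  Submodule.span ℂ {M | ∃ w : Fin n → ι, M = wordProd A w}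

/-- `H_n(A,φ) = S_n(A)|φ⟩`. -/
noncomputable def krausVecSpan (A : ι → Matrix (Fin D) (Fin D) ℂ) (n : ℕ)
    (φ : Fin D → ℂ) : Submodule ℂ (Fin D → ℂ) :=
  Submodule.span ℂ {v | ∃ w : Fin n → ι, v = wordProd A w *ᵥ φ}

/-- A quantum channel is primitive if some power maps every pure state to a
positive definite (full-rank) operator. -/
def Primitive (A : ι → Matrix (Fin D) (Fin D) ℂ) : Prop :=
  ∃ n, ∀ φ : Fin D → ℂ, φ ≠ 0 →
    ((krausMap A)^[n] (vecMulVec φ (star φ))).PosDef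

/-- `q(E_A)`: the quantum index of primitivity. -/
noncomputable def qIndex (A : ι → Matrix (Fin D) (Fin D) ℂ) : ℕ :=
  sInf {n | ∀ φ : Fin D → ℂ, φ ≠ 0 →
    ((krausMap A)^[n] (vecMulVec φ (star φ))).PosDef}

/-- `i(A)`: the minimal `n` with `S_n(A) = M_D`. -/
noncomputable def iIndex (A : ι → Matrix (Fin D) (Fin D) ℂ) : ℕ :=
  sInf {n | krausSpan A n = ⊤}

/-- Trace preservation, `∑ k, A_k† A_k = 1`. -/
def TracePreserving (A : ι → Matrix (Fin D) (Fin D) ℂ) : Prop :=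
  ∑ k, (A k)ᴴ * A k = 1

/-!
`E_A^n(|φ⟩⟨φ|) = ∑_w |A_w φ⟩⟨A_w φ|`, summed over the words `w` of length `n`, is a sum of
rank-one positive operators, hence positive definite as soon as the vectors `A_w φ` span `ℂ^D`.
If the products `A_w` span all of `M_D(ℂ)` they do, because `M ↦ M φ` maps `M_D(ℂ)` onto `ℂ^D`
for `φ ≠ 0`. Applied with `n = i(A)`, this shows that `i(A)` belongs to the set whose infimum
is `q(E_A)`.
-/

section RankOne

variable {m n 𝕜 : Type*} [Fintype n]

theorem Matrix.span_image_mulVec_eq_top [Field 𝕜] {S : Set (Matrix m n 𝕜)}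
    (hS : Submodule.span 𝕜 S = ⊤) {φ : n → 𝕜} (hφ : φ ≠ 0) :
    Submodule.span 𝕜 ((· *ᵥ φ) '' S) = ⊤ := by
  classical
  obtain ⟨j, hj⟩ := Function.ne_iff.mp hφ
  let L : Matrix m n 𝕜 →ₗ[𝕜] m → 𝕜 := (mulVecBilin 𝕜 𝕜).flip φ
  have hL : Function.Surjective L := fun v =>
    ⟨vecMulVec v (Pi.single j (φ j)⁻¹), by
      simp [L, vecMulVec_mulVec, single_dotProduct, inv_mul_cancel₀ hj]⟩
  rw [show (· *ᵥ φ) = ⇑L from rfl, ← Submodule.map_span, hS, Submodule.map_top,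
    LinearMap.range_eq_top.mpr hL]

theorem Matrix.mul_vecMulVec_star_mul_conjTranspose [CommSemiring 𝕜] [StarRing 𝕜] (M : Matrix m n 𝕜) (φ : n → 𝕜) :
    M * vecMulVec φ (star φ) * Mᴴ = vecMulVec (M *ᵥ φ) (star (M *ᵥ φ)) := by
  rw [mul_vecMulVec, vecMulVec_mul, star_mulVec]

theorem Matrix.posDef_sum_vecMulVec_of_span_eq_top [RCLike 𝕜] {W : Type*} [Fintype W] (v : W → n → 𝕜)
    (hv : Submodule.span 𝕜 (Set.range v) = ⊤) :
    (∑ w, vecMulVec (v w) (star (v w))).PosDef := by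
  set B : Matrix n W 𝕜 := of fun i w => v w i
  have hB : ∑ w, vecMulVec (v w) (star (v w)) = B * Bᴴ := by
    ext i j
    simp [B, mul_apply, Matrix.sum_apply, vecMulVec_apply]
  rw [hB]
  refine PosDef.mul_conjTranspose_self B ((injective_iff_map_eq_zero B.vecMulLinear).mpr ?_)
  intro x hx
  have hker : Submodule.span 𝕜 (Set.range v) ≤ LinearMap.ker (dotProductBilin 𝕜 𝕜 x) := by
    rw [Submodule.span_le]
    rintro _ ⟨w, rfl⟩
    simpa [B, vecMul, dotProduct] using congrFun hx w
  rw [hv] at hker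
  simpa using hker (Submodule.mem_top (x := star x))

end RankOne

omit [Fintype ι] in
theorem wordProd_cons (A : ι → Matrix (Fin D) (Fin D) ℂ) {n : ℕ} (k : ι) (w : Fin n → ι) :
    wordProd A (Fin.cons k w) = A k * wordProd A w := by
  simp [wordProd, List.ofFn_succ]

theorem iterate_krausMap_apply (A : ι → Matrix (Fin D) (Fin D) ℂ) (n : ℕ)
    (X : Matrix (Fin D) (Fin D) ℂ) :
    (krausMap A)^[n] X = ∑ w : Fin n → ι, wordProd A w * X * (wordProd A w)ᴴ := by
  induction n generalizing X with
  | zero => simp [wordProd]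
  | succ n ih =>
    rw [Function.iterate_succ_apply', ih, krausMap,
      ← (Fin.consEquiv fun _ => ι).sum_comp, Fintype.sum_prod_type]
    refine Finset.sum_congr rfl fun k _ => ?_
    rw [Finset.mul_sum, Finset.sum_mul]
    refine Finset.sum_congr rfl fun w _ => ?_
    rw [show (Fin.consEquiv fun _ => ι) (k, w) = Fin.cons k w from rfl, wordProd_cons,
      conjTranspose_mul]
    simp only [mul_assoc]

theorem posDef_iterate_krausMap_of_krausSpan_eq_top (A : ι → Matrix (Fin D) (Fin D) ℂ)
    {n : ℕ} (hfull : krausSpan A n = ⊤) {φ : Fin D → ℂ} (hφ : φ ≠ 0) :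
    ((krausMap A)^[n] (vecMulVec φ (star φ))).PosDef := by
  simp only [iterate_krausMap_apply, mul_vecMulVec_star_mul_conjTranspose]
  refine posDef_sum_vecMulVec_of_span_eq_top _ ?_
  have hrange : Set.range (fun w : Fin n → ι => wordProd A w *ᵥ φ)
      = (· *ᵥ φ) '' {M | ∃ w : Fin n → ι, M = wordProd A w} := by
    ext; simp [eq_comm]
  rw [hrange]
  exact span_image_mulVec_eq_top hfull hφ

theorem qIndex_le_iIndex (A : ι → Matrix (Fin D) (Fin D) ℂ)
    (hprim : ∃ n, krausSpan A n = ⊤) : qIndex A ≤ iIndex A :=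
  Nat.sInf_le fun _ => posDef_iterate_krausMap_of_krausSpan_eq_top A (Nat.sInf_mem hprim)

theorem stmt2_general (D : ℕ) {ι : Type*} [Fintype ι] (A : ι → Matrix (Fin D) (Fin D) ℂ)
    (n : ℕ) (hfull : krausSpan A n = ⊤) :
    (∀ φ : Fin D → ℂ, star φ ⬝ᵥ φ = 1 →
        ((krausMap A)^[n] (vecMulVec φ (star φ))).PosDef)
    ∧ qIndex A ≤ iIndex A :=
  ⟨fun _ hφ => posDef_iterate_krausMap_of_krausSpan_eq_top A hfull (by rintro rfl; simp at hφ),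
    qIndex_le_iIndex A ⟨n, hfull⟩⟩

theorem stmt2 (D : ℕ) {ι : Type*} [Fintype ι] (A : ι → Matrix (Fin D) (Fin D) ℂ)
    (hTP : TracePreserving A) (n : ℕ) (hfull : krausSpan A n = ⊤) :
    (∀ φ : Fin D → ℂ, star φ ⬝ᵥ φ = 1 →
        ((krausMap A)^[n] (vecMulVec φ (star φ))).PosDef)
    ∧ qIndex A ≤ iIndex A :=
  stmt2_general D A n hfull
end

section
/- If E_A is a quantum channel such that S_n(A) = M_D(ℂ) for some n (eventually full Kraus rank), then S_m(A) = M_D(ℂ) for all m ≥ n. -/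
open Matrix
open scoped ComplexOrder

variable {D : ℕ} {ι : Type*} [Fintype ι]

lemma wordProd_snoc {D : ℕ} {ι : Type*} (A : ι → Matrix (Fin D) (Fin D) ℂ) {n : ℕ}
    (w : Fin n → ι) (k : ι) :
    wordProd A (Fin.snoc w k : Fin (n + 1) → ι) = wordProd A w * A k := by
  rw [wordProd, wordProd, List.ofFn_succ']
  simp [List.concat_eq_append]

lemma mul_mem_krausSpan_succ {D : ℕ} {ι : Type*} (A : ι → Matrix (Fin D) (Fin D) ℂ) {m : ℕ}
    {B : Matrix (Fin D) (Fin D) ℂ} (hB : B ∈ krausSpan A m) (k : ι) :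
    B * A k ∈ krausSpan A (m + 1) := by
  suffices krausSpan A m ≤ (krausSpan A (m + 1)).comap (LinearMap.mulRight ℂ (A k)) from this hB
  refine Submodule.span_le.mpr ?_
  rintro _ ⟨w, rfl⟩
  exact Submodule.subset_span ⟨Fin.snoc w k, (wordProd_snoc A w k).symm⟩

lemma TracePreserving.eq_sum_mul_kraus {A : ι → Matrix (Fin D) (Fin D) ℂ}
    (hTP : TracePreserving A) (X : Matrix (Fin D) (Fin D) ℂ) :
    X = ∑ k, X * (A k)ᴴ * A k := by
  calc X = X * ∑ k, (A k)ᴴ * A k := by rw [hTP, mul_one]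
    _ = ∑ k, X * (A k)ᴴ * A k := by simp only [Finset.mul_sum, mul_assoc]

lemma krausSpan_succ_eq_top {A : ι → Matrix (Fin D) (Fin D) ℂ} (hTP : TracePreserving A)
    {m : ℕ} (hm : krausSpan A m = ⊤) : krausSpan A (m + 1) = ⊤ := by
  refine eq_top_iff.mpr fun X _ => ?_
  rw [hTP.eq_sum_mul_kraus X]
  exact Submodule.sum_mem _ fun k _ => mul_mem_krausSpan_succ A (hm ▸ Submodule.mem_top) k

theorem stmt3 (D : ℕ) {ι : Type*} [Fintype ι] (A : ι → Matrix (Fin D) (Fin D) ℂ)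
    (hTP : TracePreserving A) (n : ℕ) (hfull : krausSpan A n = ⊤) :
    ∀ m, n ≤ m → krausSpan A m = ⊤ := by
  intro m hm
  induction m, hm using Nat.le_induction with
  | base => exact hfull
  | succ m _ ih => exact krausSpan_succ_eq_top hTP ih
end

section
/- For the quantum channel on M_2(ℂ) with Kraus operators σ_x/√3, σ_y/√3, σ_z/√3 (the Pauli matrices), we have q(E) = 1 but i(A) = 2; in particular q(E_A) < i(A) is possible. -/
open Matrix
open scoped ComplexOrder

variable {D : ℕ} {ι : Type*} [Fintype ι]

/-- The three Pauli matrices, each normalized by `1/√3`. -/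
noncomputable def pauliKraus : Fin 3 → Matrix (Fin 2) (Fin 2) ℂ :=
  ((Real.sqrt 3 : ℂ))⁻¹ • ![!![0, 1; 1, 0], !![0, -Complex.I; Complex.I, 0], !![1, 0; 0, -1]]

/-! With `σ_k` the Pauli matrices, `∑ σ_k X σ_k = 2 tr(X) - X`, so for a unit vector `φ` and its
orthogonal vector `φ⊥` the channel sends `|φ⟩⟨φ|` to `(1 + |φ⊥⟩⟨φ⊥|) / 3`, which is positive
definite, whereas `|φ⟩⟨φ|` itself has rank one: `q(E) = 1`. Each product `σ_a σ_b` is `1` or `±i`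
times a Pauli matrix, so `S_2` contains the basis `1, σ_x, σ_y, σ_z` of `M_2`; `S_0` and `S_1` are
spanned by one and three matrices, too few to fill the four-dimensional `M_2`: `i(A) = 2`. -/

theorem not_posDef_vecMulVec_self (hD : 1 < D) (φ : Fin D → ℂ) :
    ¬ (vecMulVec φ (star φ)).PosDef := fun h => by
  have hrank := rank_of_isUnit _ h.isUnit
  have := rank_vecMulVec_le φ (star φ)
  rw [Fintype.card_fin] at hrank
  omega

theorem qIndex_eq_one (hD : 1 < D) (A : ι → Matrix (Fin D) (Fin D) ℂ)
    (hA : ∀ φ : Fin D → ℂ, φ ≠ 0 → (krausMap A (vecMulVec φ (star φ))).PosDef) :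
    qIndex A = 1 := by
  refine IsLeast.csInf_eq ⟨by simpa using hA, fun n hn => Nat.one_le_iff_ne_zero.2 ?_⟩
  rintro rfl
  have : NeZero D := ⟨by omega⟩
  obtain ⟨φ, hφ⟩ := exists_ne (0 : Fin D → ℂ)
  exact not_posDef_vecMulVec_self hD φ (hn φ hφ)

theorem krausSpan_eq_span_range {ι : Type*} (A : ι → Matrix (Fin D) (Fin D) ℂ) (n : ℕ) :
    krausSpan A n = Submodule.span ℂ (Set.range (wordProd A (n := n))) := by
  simp only [krausSpan, Set.range, eq_comm]

theorem krausSpan_ne_top_of_card_pow_lt (A : ι → Matrix (Fin D) (Fin D) ℂ) {n : ℕ}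
    (h : Fintype.card ι ^ n < D * D) : krausSpan A n ≠ ⊤ := fun htop => by
  have hle := finrank_range_le_card (R := ℂ) (wordProd A (n := n))
  rw [Set.finrank, ← krausSpan_eq_span_range, htop, finrank_top, Module.finrank_matrix] at hle
  simp only [Fintype.card_fin, Fintype.card_fun, Module.finrank_self, mul_one] at hle
  omega

theorem iIndex_eq_of_krausSpan_eq_top {ι : Type*} (A : ι → Matrix (Fin D) (Fin D) ℂ) {n : ℕ}
    (htop : krausSpan A n = ⊤) (hlt : ∀ m < n, krausSpan A m ≠ ⊤) : iIndex A = n :=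
  IsLeast.csInf_eq ⟨htop, fun m hm => not_lt.1 fun h => hlt m h hm⟩

def pauli : Fin 3 → Matrix (Fin 2) (Fin 2) ℂ :=
  ![!![0, 1; 1, 0], !![0, -Complex.I; Complex.I, 0], !![1, 0; 0, -1]]

theorem pauliKraus_eq : pauliKraus = ((Real.sqrt 3 : ℂ))⁻¹ • pauli := rfl

theorem inv_sqrt_three_mul_self : ((Real.sqrt 3 : ℂ))⁻¹ * ((Real.sqrt 3 : ℂ))⁻¹ = 3⁻¹ := by
  rw [← mul_inv, ← Complex.ofReal_mul, Real.mul_self_sqrt (by norm_num)]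
  norm_num

theorem pauli_conjTranspose (k : Fin 3) : (pauli k)ᴴ = pauli k := by
  fin_cases k <;> ext i j <;> fin_cases i <;> fin_cases j <;> simp [pauli]

theorem sum_pauli_mul_mul_pauli (X : Matrix (Fin 2) (Fin 2) ℂ) :
    ∑ k, pauli k * X * pauli k = (2 * X.trace) • 1 - X := by
  ext i j
  fin_cases i <;> fin_cases j <;>
    simp [pauli, Fin.sum_univ_three, Fin.sum_univ_two, Matrix.mul_apply, Matrix.trace, vecMul,
      dotProduct] <;>
    ring_nf <;> simp only [Complex.I_sq] <;> ring

theorem krausMap_pauliKraus (X : Matrix (Fin 2) (Fin 2) ℂ) :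
    krausMap pauliKraus X = (3 : ℂ)⁻¹ • ((2 * X.trace) • 1 - X) := by
  simp only [krausMap, pauliKraus_eq, Pi.smul_apply, conjTranspose_smul, pauli_conjTranspose,
    Complex.star_def, Complex.conj_ofReal, map_inv₀, smul_mul_assoc, mul_smul_comm, smul_smul,
    inv_sqrt_three_mul_self, ← Finset.smul_sum, sum_pauli_mul_mul_pauli]

theorem vecMulVec_self_add_vecMulVec_orthogonal (φ : Fin 2 → ℂ) :
    vecMulVec φ (star φ) + vecMulVec ![star (φ 1), -star (φ 0)] (star ![star (φ 1), -star (φ 0)])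
      = (star φ ⬝ᵥ φ) • 1 := by
  ext i j
  simp only [Matrix.add_apply, vecMulVec_apply, Matrix.smul_apply, one_apply]
  fin_cases i <;> fin_cases j <;> simp [dotProduct, Fin.sum_univ_two] <;> ring

theorem posDef_krausMap_pauliKraus {φ : Fin 2 → ℂ} (hφ : φ ≠ 0) :
    (krausMap pauliKraus (vecMulVec φ (star φ))).PosDef := by
  set ψ : Fin 2 → ℂ := ![star (φ 1), -star (φ 0)]
  have hnorm : 0 < star φ ⬝ᵥ φ := dotProduct_star_self_pos_iff.2 hφ
  have hdecomp : (2 * (vecMulVec φ (star φ)).trace) • 1 - vecMulVec φ (star φ)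
      = (star φ ⬝ᵥ φ) • 1 + vecMulVec ψ (star ψ) := by
    rw [trace_vecMulVec, dotProduct_comm, two_mul, add_smul,
      ← vecMulVec_self_add_vecMulVec_orthogonal]
    abel
  rw [krausMap_pauliKraus, hdecomp]
  exact ((PosDef.one.smul hnorm).add_posSemidef (posSemidef_vecMulVec_self_star ψ)).smul
    (by norm_num)

theorem pauli_mul_pauli_mem_krausSpan_two (a b : Fin 3) :
    pauli a * pauli b ∈ krausSpan pauliKraus 2 := by
  have hword : wordProd pauliKraus ![a, b] = (3 : ℂ)⁻¹ • (pauli a * pauli b) := by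
    simp [wordProd, List.ofFn_succ, pauliKraus_eq, smul_smul, inv_sqrt_three_mul_self]
  have hmem : wordProd pauliKraus ![a, b] ∈ krausSpan pauliKraus 2 :=
    Submodule.subset_span ⟨_, rfl⟩
  rw [hword] at hmem
  simpa using Submodule.smul_mem _ (3 : ℂ) hmem

theorem eq_pauli_mul_pauli_combination (M : Matrix (Fin 2) (Fin 2) ℂ) :
    M = ((M 0 0 + M 1 1) / 2) • (pauli 0 * pauli 0)
      + (-Complex.I * (M 0 1 + M 1 0) / 2) • (pauli 1 * pauli 2)
      + ((M 0 1 - M 1 0) / 2) • (pauli 2 * pauli 0)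
      + (-Complex.I * (M 0 0 - M 1 1) / 2) • (pauli 0 * pauli 1) := by
  ext i j
  fin_cases i <;> fin_cases j <;> simp [pauli] <;> ring_nf <;> simp only [Complex.I_sq] <;> ring

theorem krausSpan_pauliKraus_two : krausSpan pauliKraus 2 = ⊤ := by
  refine eq_top_iff.2 fun M _ => ?_
  rw [eq_pauli_mul_pauli_combination M]
  have hmem := pauli_mul_pauli_mem_krausSpan_two
  exact add_mem (add_mem (add_mem (Submodule.smul_mem _ _ (hmem 0 0))
    (Submodule.smul_mem _ _ (hmem 1 2))) (Submodule.smul_mem _ _ (hmem 2 0)))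
    (Submodule.smul_mem _ _ (hmem 0 1))

theorem stmt7 : qIndex pauliKraus = 1 ∧ iIndex pauliKraus = 2
    ∧ qIndex pauliKraus < iIndex pauliKraus := by
  have hq : qIndex pauliKraus = 1 :=
    qIndex_eq_one one_lt_two _ fun _ => posDef_krausMap_pauliKraus
  have hi : iIndex pauliKraus = 2 := by
    refine iIndex_eq_of_krausSpan_eq_top _ krausSpan_pauliKraus_two fun m hm => ?_
    refine krausSpan_ne_top_of_card_pow_lt _ ?_
    interval_cases m <;> simp
  exact ⟨hq, hi, by omega⟩
end

section
/- If ρ and ρ' are two distinct positive semidefinite fixed points of a quantum channel with ρ positive definite, then there exists ε > 0 such that ρ - ερ' is positive semidefinite but not full rank; consequently the channel has a non-full-rank positive semidefinite fixed point. -/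
/-!
Write `ρ = s²` with `s = √ρ` invertible. Then `t = s⁻¹ ρ' s⁻¹` is positive semidefinite and
nonzero; if `r > 0` is the top of its spectrum, then `t ≤ r` and `r - t` is singular, so
`ρ - r⁻¹ ρ' = r⁻¹ s (r - t) s` is positive semidefinite and singular. It is a fixed point because
the channel is linear, and it is nonzero because `ρ'` is not a multiple of `ρ`.
-/

open Matrix
open scoped ComplexOrder

variable {D : ℕ} {ι : Type*} [Fintype ι]

section ContinuousFunctionalCalculus

variable {A : Type*} [PartialOrder A] [Ring A] [StarRing A] [TopologicalSpace A]
  [StarOrderedRing A] [Algebra ℝ A] [ContinuousFunctionalCalculus ℝ A IsSelfAdjoint]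
  [NonnegSpectrumClass ℝ A]

lemma exists_pos_le_algebraMap_not_isUnit_sub {t : A} (ht : 0 ≤ t) (ht0 : t ≠ 0) :
    ∃ r > 0, t ≤ algebraMap ℝ A r ∧ ¬ IsUnit (algebraMap ℝ A r - t) := by
  have : Nontrivial A := nontrivial_of_ne t 0 ht0
  obtain ⟨r, hr, hmax⟩ :=
    (ContinuousFunctionalCalculus.isCompact_spectrum (R := ℝ) t).exists_isMaxOn
      (ContinuousFunctionalCalculus.spectrum_nonempty t ht.isSelfAdjoint) continuousOn_id
  refine ⟨r, ?_, le_algebraMap_of_spectrum_le hmax, spectrum.mem_iff.mp hr⟩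
  refine (spectrum_nonneg_of_nonneg ht hr).lt_of_ne' fun hr0 => ht0 ?_
  refine CFC.eq_zero_of_spectrum_subset_zero (R := ℝ) t fun x hx => ?_
  exact le_antisymm (hr0 ▸ hmax hx) (spectrum_nonneg_of_nonneg ht hx)

theorem IsStrictlyPositive.exists_nonneg_sub_smul_not_isUnit [StarModule ℝ A]
    [IsSemitopologicalRing A] [T2Space A] {a b : A} (ha : IsStrictlyPositive a) (hb : 0 ≤ b)
    (hb0 : b ≠ 0) : ∃ ε : ℝ, 0 < ε ∧ 0 ≤ a - ε • b ∧ ¬ IsUnit (a - ε • b) := by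
  obtain ⟨s, hs⟩ := ha.isUnit_cfcSqrt
  have hsa : (s : A) * s = a := hs ▸ CFC.sqrt_mul_sqrt_self a ha.nonneg
  have hs_sa : IsSelfAdjoint (s : A) := hs ▸ (CFC.sqrt_nonneg a).isSelfAdjoint
  have hsinv_sa : IsSelfAdjoint (↑s⁻¹ : A) := by
    rw [IsSelfAdjoint, ← Units.coe_star_inv, show star s = s from Units.ext hs_sa.star_eq]
  set t := (↑s⁻¹ : A) * b * ↑s⁻¹ with ht_def
  have hbt : b = s * t * s := by simp [ht_def, mul_assoc]
  have ht : 0 ≤ t := hsinv_sa.conjugate_nonneg hb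
  have ht0 : t ≠ 0 := fun h => hb0 (by simp [hbt, h])
  obtain ⟨r, hr, hle, hnu⟩ := exists_pos_le_algebraMap_not_isUnit_sub ht ht0
  have hconj : a - r⁻¹ • b = r⁻¹ • (↑s * (algebraMap ℝ A r - t) * ↑s) := by
    rw [mul_sub, sub_mul, ← hbt, Algebra.algebraMap_eq_smul_one, mul_smul_comm, smul_mul_assoc,
      mul_one, hsa, smul_sub, smul_smul, inv_mul_cancel₀ hr.ne', one_smul]
  refine ⟨r⁻¹, inv_pos.2 hr, ?_, ?_⟩
  · rw [hconj]
    exact smul_nonneg (inv_nonneg.2 hr.le) (hs_sa.conjugate_nonneg (sub_nonneg.2 hle))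
  · rw [hconj]
    intro hu
    replace hu := (isUnit_smul_iff (Units.mk0 r⁻¹ (inv_ne_zero hr.ne')) _).mp hu
    exact hnu <| (Units.isUnit_mul_units _ s).mp <|
      (Units.isUnit_units_mul s _).mp (mul_assoc (s : A) _ _ ▸ hu)

end ContinuousFunctionalCalculus

lemma krausMap_sub (A : ι → Matrix (Fin D) (Fin D) ℂ) (X Y : Matrix (Fin D) (Fin D) ℂ) :
    krausMap A (X - Y) = krausMap A X - krausMap A Y := by
  simp only [krausMap, Matrix.mul_sub, Matrix.sub_mul, Finset.sum_sub_distrib]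

lemma krausMap_smul (A : ι → Matrix (Fin D) (Fin D) ℂ) (c : ℂ) (X : Matrix (Fin D) (Fin D) ℂ) :
    krausMap A (c • X) = c • krausMap A X := by
  simp only [krausMap, Matrix.mul_smul, Matrix.smul_mul, Finset.smul_sum]

open scoped MatrixOrder in
theorem stmt12_general (D : ℕ) {ι : Type*} [Fintype ι]
    (A : ι → Matrix (Fin D) (Fin D) ℂ)
    (ρ ρ' : Matrix (Fin D) (Fin D) ℂ) (hρ : ρ.PosDef) (hρ' : ρ'.PosSemidef)
    (hfix : krausMap A ρ = ρ) (hfix' : krausMap A ρ' = ρ')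
    (hns : ∀ c : ℂ, ρ' ≠ c • ρ) :
    (∃ ε : ℝ, 0 < ε ∧ (ρ - (ε : ℂ) • ρ').PosSemidef ∧ ¬ (ρ - (ε : ℂ) • ρ').PosDef)
    ∧ ∃ σ : Matrix (Fin D) (Fin D) ℂ,
        σ ≠ 0 ∧ σ.PosSemidef ∧ ¬ σ.PosDef ∧ krausMap A σ = σ := by
  have hρ'0 : ρ' ≠ 0 := fun h => hns 0 (by simp [h])
  obtain ⟨ε, hε, hnn, hnu⟩ :=
    hρ.isStrictlyPositive.exists_nonneg_sub_smul_not_isUnit hρ'.nonneg hρ'0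
  have hpsd : (ρ - (ε : ℂ) • ρ').PosSemidef := by
    rw [Complex.coe_smul ε ρ']
    exact hnn.posSemidef
  have hnpd : ¬ (ρ - (ε : ℂ) • ρ').PosDef := by
    rw [Complex.coe_smul ε ρ']
    exact fun h => hnu h.isUnit
  have hne : ρ - (ε : ℂ) • ρ' ≠ 0 := by
    rw [sub_ne_zero]
    intro h
    refine hns (ε : ℂ)⁻¹ ?_
    rw [h, smul_smul, inv_mul_cancel₀ (Complex.ofReal_ne_zero.2 hε.ne'), one_smul]
  exact ⟨⟨ε, hε, hpsd, hnpd⟩, ρ - (ε : ℂ) • ρ', hne, hpsd, hnpd,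
    by rw [krausMap_sub, krausMap_smul, hfix, hfix']⟩

theorem stmt12 (D : ℕ) {ι : Type*} [Fintype ι]
    (A : ι → Matrix (Fin D) (Fin D) ℂ) (hTP : TracePreserving A)
    (ρ ρ' : Matrix (Fin D) (Fin D) ℂ) (hρ : ρ.PosDef) (hρ' : ρ'.PosSemidef)
    (hfix : krausMap A ρ = ρ) (hfix' : krausMap A ρ' = ρ')
    (hns : ∀ c : ℂ, ρ' ≠ c • ρ) :
    (∃ ε : ℝ, 0 < ε ∧ (ρ - (ε : ℂ) • ρ').PosSemidef ∧ ¬ (ρ - (ε : ℂ) • ρ').PosDef)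
    ∧ ∃ σ : Matrix (Fin D) (Fin D) ℂ,
        σ ≠ 0 ∧ σ.PosSemidef ∧ ¬ σ.PosDef ∧ krausMap A σ = σ :=
  stmt12_general D A ρ ρ' hρ hρ' hfix hfix' hns
end

section
/- For D > 2, consider the completely positive map on M_D(ℂ) with Kraus operators A_0 = Σ_{i=0}^{D−1} |i+1 mod D⟩⟨i| (cyclic shift) and A_1 = |1⟩⟨D−1|. Then the span of all products of exactly D(D−1)−1 of these operators has dimension at most D² − 1 (so i(A) ≥ D² − D), while the products of exactly D(D−1) operators span all of M_D(ℂ) (so i(A) = D² − D). -/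
open Matrix
open scoped ComplexOrder

variable {D : ℕ} {ι : Type*} [Fintype ι]

/-!
Write `P = A 0` for the cyclic shift and `R = A 1 = E 1 (-1)`, with indices in `ℤ/D`. Because
`P ^ D = 1` and `R P^k R` is `R` for `k ≡ -2` and `0` otherwise, every word of length `n` is
`P ^ n`, `0`, or `P^a R P^b = E (a+1) (-(b+1))` with `n = a + 1 + b + m (D - 1)`, where `m` counts
the idempotent blocks `R P^(D-2) = E 1 1`. For `n = D (D - 1) - 1` each of them has equal
`(0, 1)` and `(-1, 0)` entries: for `P ^ n` both are `1`, and for `E (a+1) (-(b+1))` a nonzero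
entry at either place forces `a + b ≥ 2 D - 3` and `D ∣ m + 1`, hence `n ≥ D ^ 2 - 1`. So
`S_{D(D-1)-1}` lies in a hyperplane. Conversely every `E i j` with `(i, j) ≠ (0, 0)` is such a
word of length `D (D - 1)`, and `E 0 0 = P^(D(D-1)) - ∑_{k ≠ 0} E k k`. Since `P` is invertible,
`S_n = M_D` persists for all larger `n`, so `i(A) = D (D - 1)`.
-/

open Fin.NatCast Fin.CommRing

section KrausSpan

variable {D : ℕ} {κ : Type*}

theorem wordProd_append (A : κ → Matrix (Fin D) (Fin D) ℂ) {m n : ℕ} (v : Fin m → κ)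
    (w : Fin n → κ) : wordProd A (Fin.append v w) = wordProd A v * wordProd A w := by
  simp [wordProd, List.ofFn_fin_append, List.ofFn_comp']

theorem wordProd_succ (A : κ → Matrix (Fin D) (Fin D) ℂ) {n : ℕ} (w : Fin (n + 1) → κ) :
    wordProd A w = A (w 0) * wordProd A (Fin.tail w) := by
  simp [wordProd, List.ofFn_succ, Fin.tail]

theorem krausSpan_mul_le (A : κ → Matrix (Fin D) (Fin D) ℂ) (m n : ℕ) :
    krausSpan A m * krausSpan A n ≤ krausSpan A (m + n) := by
  rw [krausSpan, krausSpan, Submodule.span_mul_span]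
  refine Submodule.span_mono ?_
  rintro _ ⟨_, ⟨v, rfl⟩, _, ⟨w, rfl⟩, rfl⟩
  exact ⟨Fin.append v w, (wordProd_append A v w).symm⟩

variable {A : κ → Matrix (Fin D) (Fin D) ℂ}

theorem mul_mem_krausSpan {m n : ℕ} {X Y : Matrix (Fin D) (Fin D) ℂ} (hX : X ∈ krausSpan A m)
    (hY : Y ∈ krausSpan A n) : X * Y ∈ krausSpan A (m + n) :=
  krausSpan_mul_le A m n (Submodule.mul_mem_mul hX hY)

theorem one_mem_krausSpan_zero : 1 ∈ krausSpan A 0 :=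
  Submodule.subset_span ⟨Fin.elim0, by simp [wordProd]⟩

theorem mem_krausSpan_one (k : κ) : A k ∈ krausSpan A 1 :=
  Submodule.subset_span ⟨fun _ => k, by simp [wordProd]⟩

theorem pow_mem_krausSpan {n : ℕ} {X : Matrix (Fin D) (Fin D) ℂ} (hX : X ∈ krausSpan A n)
    (k : ℕ) : X ^ k ∈ krausSpan A (n * k) := by
  induction k with
  | zero => exact one_mem_krausSpan_zero
  | succ k ih => simpa [pow_succ, mul_add] using mul_mem_krausSpan ih hX

theorem krausSpan_succ_eq_top_s18 {k : κ} (hk : IsUnit (A k)) {n : ℕ} (h : krausSpan A n = ⊤) :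
    krausSpan A (n + 1) = ⊤ := by
  obtain ⟨u, hu⟩ := hk
  refine Submodule.eq_top_iff'.2 fun M => ?_
  rw [← u.mul_inv_cancel_left M, hu, add_comm]
  exact mul_mem_krausSpan (mem_krausSpan_one k) (h ▸ Submodule.mem_top)

theorem iIndex_eq_succ {k : κ} (hk : IsUnit (A k)) {n : ℕ} (htop : krausSpan A (n + 1) = ⊤)
    (hn : krausSpan A n ≠ ⊤) : iIndex A = n + 1 := by
  refine (Nat.sInf_upward_closed_eq_succ_iff (fun m₁ m₂ hle h => ?_) n).2 ⟨htop, hn⟩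
  induction m₂, hle using Nat.le_induction with
  | base => exact h
  | succ m _ ih => exact krausSpan_succ_eq_top_s18 hk ih

end KrausSpan

section CyclicShift

variable {D : ℕ} [NeZero D]

def cyclicShift (D : ℕ) [NeZero D] : Matrix (Fin D) (Fin D) ℂ :=
  of fun i j => if i = j + 1 then 1 else 0

theorem cyclicShift_pow_apply (a : ℕ) (i j : Fin D) :
    (cyclicShift D ^ a) i j = if i = j + a then 1 else 0 := by
  induction a generalizing j with
  | zero => simp [one_apply]
  | succ a ih =>
    rw [pow_succ, mul_apply, Finset.sum_eq_single (j + 1), ih]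
    · simp [cyclicShift, add_assoc, add_comm (1 : Fin D)]
    · intro k _ hk
      simp [cyclicShift, hk]
    · simp

theorem cyclicShift_pow_card : cyclicShift D ^ D = 1 := by
  ext i j
  simp [cyclicShift_pow_apply, one_apply]

theorem isUnit_cyclicShift : IsUnit (cyclicShift D) :=
  IsUnit.of_pow_eq_one cyclicShift_pow_card (NeZero.ne D)

theorem cyclicShift_pow_mul_single (a : ℕ) (i j : Fin D) :
    cyclicShift D ^ a * single i j (1 : ℂ) = single (i + a) j 1 := by
  ext k l
  by_cases hl : l = j
  · simp [hl, mul_single_apply_same, cyclicShift_pow_apply, single_apply, eq_comm]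
  · simp [mul_single_apply_of_ne (hbj := hl), Ne.symm hl]

theorem single_mul_cyclicShift_pow (a : ℕ) (i j : Fin D) :
    single i j (1 : ℂ) * cyclicShift D ^ a = single i (j - a) 1 := by
  ext k l
  by_cases hk : k = i
  · simp [hk, single_mul_apply_same, cyclicShift_pow_apply, single_apply, sub_eq_iff_eq_add]
  · simp [single_mul_apply_of_ne (h := hk), Ne.symm hk]

end CyclicShift

section Arithmetic

variable {D : ℕ} [NeZero D]

theorem Fin.natCast_pred_self : ((D - 1 : ℕ) : Fin D) = -1 := by
  rw [Nat.cast_pred (NeZero.pos D), Fin.natCast_self, zero_sub]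

theorem add_add_mul_pred_ne_of_natCast_eq_zero {x y m : ℕ} (hx : (x : Fin D) = 0)
    (hy : (y : Fin D) = 0) (hx0 : x ≠ 0) (hy0 : y ≠ 0) :
    x + y + m * (D - 1) ≠ D * (D - 1) + 1 := by
  intro h
  have hm : ((m + 1 : ℕ) : Fin D) = 0 := by
    have := congrArg (Nat.cast : ℕ → Fin D) h
    push_cast [Fin.natCast_pred_self, Fin.natCast_self, hx, hy] at this ⊢
    linear_combination -this
  rw [Fin.natCast_eq_zero] at hx hy hm
  have := Nat.le_of_dvd (Nat.pos_of_ne_zero hx0) hx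
  have := Nat.le_of_dvd (Nat.pos_of_ne_zero hy0) hy
  have := Nat.le_of_dvd m.succ_pos hm
  obtain ⟨k, rfl⟩ : ∃ k, D = k + 1 := ⟨D - 1, (Nat.sub_add_cancel (NeZero.pos D)).symm⟩
  rw [Nat.add_sub_cancel] at h
  nlinarith

end Arithmetic

theorem one_add_add_mul_pred_le {D b m : ℕ} (hD : 2 ≤ D) (hb : b < D) (hm : m < D)
    (h : b < D - 1 ∨ m < D - 1) : 1 + b + m * (D - 1) ≤ D * (D - 1) := by
  obtain ⟨k, rfl⟩ : ∃ k, D = k + 2 := ⟨D - 2, by omega⟩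
  rw [show k + 2 - 1 = k + 1 by omega] at h ⊢
  rcases h with h | h <;> nlinarith

section ShiftAndCorner

variable {D : ℕ} [NeZero D] {A : Fin 2 → Matrix (Fin D) (Fin D) ℂ}
  (hA0 : A 0 = cyclicShift D) (hA1 : A 1 = single 1 (-1) 1)
include hA0 hA1

theorem wordProd_eq_pow_or_zero_or_single {n : ℕ} (w : Fin n → Fin 2) :
    wordProd A w = cyclicShift D ^ n ∨ wordProd A w = 0 ∨
      ∃ a b m : ℕ, a + 1 + b + m * (D - 1) = n ∧
        wordProd A w = single (a + 1 : Fin D) (-(b + 1) : Fin D) 1 := by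
  induction n with
  | zero => exact Or.inl (by simp [wordProd])
  | succ n ih =>
    rw [wordProd_succ]
    obtain hw | hw : w 0 = 0 ∨ w 0 = 1 := by omega
    · rw [hw, hA0]
      rcases ih (Fin.tail w) with h | h | ⟨a, b, m, hlen, h⟩ <;> rw [h]
      · exact Or.inl (pow_succ' _ _).symm
      · exact Or.inr (Or.inl (mul_zero _))
      · refine Or.inr (Or.inr ⟨a + 1, b, m, by omega, ?_⟩)
        rw [← pow_one (cyclicShift D), cyclicShift_pow_mul_single]
        push_cast
        ring_nf
    · rw [hw, hA1]
      rcases ih (Fin.tail w) with h | h | ⟨a, b, m, hlen, h⟩ <;> rw [h]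
      · refine Or.inr (Or.inr ⟨0, n, 0, by omega, ?_⟩)
        rw [single_mul_cyclicShift_pow]
        push_cast
        ring_nf
      · exact Or.inr (Or.inl (mul_zero _))
      · by_cases hc : (-1 : Fin D) = a + 1
        -- `a ≡ -2` gives `R P^a R = R`: of the `a + 1` new letters, `D - 1` form one more block
        -- `R P^(D-2)` and the remaining `a' = a + 2 - D` are a multiple of `D`
        · have hdvd : D ∣ a + 2 := Fin.natCast_eq_zero.1 (by push_cast; linear_combination -hc)
          obtain ⟨a', ha'⟩ := Nat.exists_eq_add_of_le (Nat.le_of_dvd (by omega) hdvd)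
          refine Or.inr (Or.inr ⟨a', b, m + 1, ?_, ?_⟩)
          · have := NeZero.pos D
            rw [add_mul, one_mul]
            omega
          · rw [← hc, single_mul_single_same, mul_one]
            have : ((a + 2 : ℕ) : Fin D) = ((D + a' : ℕ) : Fin D) := congrArg _ ha'
            push_cast [Fin.natCast_self] at this
            congr 1
            linear_combination hc + this
        · rw [single_mul_single_of_ne (h := hc)]
          exact Or.inr (Or.inl rfl)

theorem wordProd_apply_zero_one {n : ℕ} (hn : n + 1 = D * (D - 1)) (w : Fin n → Fin 2) :
    wordProd A w 0 1 = wordProd A w (-1) 0 := by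
  rcases wordProd_eq_pow_or_zero_or_single hA0 hA1 w with h | h | ⟨a, b, m, hlen, h⟩ <;> rw [h]
  · simp only [cyclicShift_pow_apply]
    congr 1
    apply propext
    constructor <;> intro h <;> linear_combination h
  · rfl
  · rw [single_apply, single_apply, if_neg, if_neg]
    · rintro ⟨ha, hb⟩
      refine add_add_mul_pred_ne_of_natCast_eq_zero (D := D) (x := a + 2) (y := b + 1) (m := m)
        ?_ ?_ (by omega) (by omega) (by omega) <;> push_cast
      · linear_combination ha
      · linear_combination -hb
    · rintro ⟨ha, hb⟩
      refine add_add_mul_pred_ne_of_natCast_eq_zero (D := D) (x := a + 1) (y := b + 2) (m := m)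
        ?_ ?_ (by omega) (by omega) (by omega) <;> push_cast
      · linear_combination ha
      · linear_combination -hb

theorem krausSpan_ne_top {n : ℕ} (hn : n + 1 = D * (D - 1)) : krausSpan A n ≠ ⊤ := by
  intro htop
  have hle : krausSpan A n ≤ LinearMap.ker
      (entryLinearMap ℂ ℂ (0 : Fin D) (1 : Fin D) - entryLinearMap ℂ ℂ (-1) 0) := by
    rw [krausSpan, Submodule.span_le]
    rintro _ ⟨w, rfl⟩
    simp [wordProd_apply_zero_one hA0 hA1 hn]
  have hD : (1 : Fin D) ≠ 0 := by
    intro h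
    have hD1 := Nat.le_of_dvd one_pos (Fin.natCast_eq_zero.1 (Nat.cast_one.trans h))
    rw [show D - 1 = 0 by omega, mul_zero] at hn
    exact n.succ_ne_zero hn
  have hmem : single (0 : Fin D) (1 : Fin D) (1 : ℂ) ∈ krausSpan A n :=
    htop ▸ Submodule.mem_top
  simpa [hD] using hle hmem

theorem single_mem_krausSpan (hD : 2 ≤ D) (a b m : ℕ) :
    single (a + 1 : Fin D) (-(b + 1) : Fin D) (1 : ℂ) ∈
      krausSpan A (a + 1 + b + m * (D - 1)) := by
  have hblock : A 1 * cyclicShift D ^ (D - 2) = single 1 1 1 := by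
    rw [hA1, single_mul_cyclicShift_pow]
    congr 1
    push_cast [Nat.cast_sub hD, Fin.natCast_self]
    ring
  have hidem : (single (1 : Fin D) 1 (1 : ℂ)) ^ m * A 1 = A 1 := by
    induction m with
    | zero => simp
    | succ m ih => rw [pow_succ', mul_assoc, ih, hA1, single_mul_single_same, one_mul]
  have hword : cyclicShift D ^ a * (A 1 * cyclicShift D ^ (D - 2)) ^ m * A 1 * cyclicShift D ^ b
      = single (a + 1 : Fin D) (-(b + 1) : Fin D) (1 : ℂ) := by
    rw [hblock, mul_assoc (cyclicShift D ^ a), hidem, hA1, cyclicShift_pow_mul_single,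
      single_mul_cyclicShift_pow]
    congr 1 <;> ring
  have hP (k : ℕ) : cyclicShift D ^ k ∈ krausSpan A k := by
    simpa [hA0] using pow_mem_krausSpan (mem_krausSpan_one (A := A) 0) k
  have hmem := mul_mem_krausSpan (mul_mem_krausSpan (mul_mem_krausSpan (hP a)
    (pow_mem_krausSpan (mul_mem_krausSpan (mem_krausSpan_one 1) (hP (D - 2))) m))
    (mem_krausSpan_one 1)) (hP b)
  rw [hword, show 1 + (D - 2) = D - 1 by omega] at hmem
  convert hmem using 2
  ring

theorem single_mem_krausSpan_of_ne (hD : 2 ≤ D) {i j : Fin D} (hij : (i, j) ≠ (0, 0)) :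
    single i j (1 : ℂ) ∈ krausSpan A (D * (D - 1)) := by
  -- `b`, `m` are the residues forced by `-(b + 1) = j` and (given the length) `a + 1 = i`
  set b := (-(j + 1) : Fin D).val
  set m := (i - j - 1 : Fin D).val
  have hb : (b : Fin D) = -(j + 1) := Fin.cast_val_eq_self _
  have hm : (m : Fin D) = i - j - 1 := Fin.cast_val_eq_self _
  have hle : 1 + b + m * (D - 1) ≤ D * (D - 1) := by
    refine one_add_add_mul_pred_le hD (Fin.is_lt _) (Fin.is_lt _) ?_
    by_contra! h
    have hb' : b = D - 1 := by have := (-(j + 1) : Fin D).is_lt; omega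
    have hm' : m = D - 1 := by have := (i - j - 1 : Fin D).is_lt; omega
    rw [hb', Fin.natCast_pred_self] at hb
    rw [hm', Fin.natCast_pred_self] at hm
    refine hij (Prod.ext ?_ ?_) <;> simp only
    · linear_combination hb - hm
    · linear_combination hb
  obtain ⟨a, ha⟩ : ∃ a, a + (1 + b + m * (D - 1)) = D * (D - 1) :=
    ⟨_, Nat.sub_add_cancel hle⟩
  have hcast := congrArg (Nat.cast : ℕ → Fin D) ha
  push_cast [Fin.natCast_pred_self, Fin.natCast_self, hb, hm] at hcast
  convert single_mem_krausSpan hA0 hA1 hD a b m using 2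
  · omega
  · linear_combination -hcast
  · rw [hb]; ring

theorem krausSpan_eq_top (hD : 2 ≤ D) : krausSpan A (D * (D - 1)) = ⊤ := by
  have hone : (1 : Matrix (Fin D) (Fin D) ℂ) ∈ krausSpan A (D * (D - 1)) := by
    have h1 : (1 : Matrix (Fin D) (Fin D) ℂ) = A 0 ^ (D * (D - 1)) := by
      rw [pow_mul, hA0, cyclicShift_pow_card, one_pow]
    rw [h1]
    simpa using pow_mem_krausSpan (mem_krausSpan_one (A := A) 0) (D * (D - 1))
  have hsingle (i j : Fin D) : single i j (1 : ℂ) ∈ krausSpan A (D * (D - 1)) := by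
    by_cases hij : (i, j) = (0, 0)
    · obtain ⟨rfl, rfl⟩ := Prod.mk.inj hij
      rw [← add_sub_cancel_right (single 0 0 1) (∑ k ∈ Finset.univ.erase 0, single k k 1),
        Finset.add_sum_erase _ (fun k : Fin D => single k k (1 : ℂ)) (Finset.mem_univ 0),
        sum_single_one]
      refine sub_mem hone (sum_mem fun k hk => single_mem_krausSpan_of_ne hA0 hA1 hD ?_)
      simpa using Finset.ne_of_mem_erase hk
    · exact single_mem_krausSpan_of_ne hA0 hA1 hD hij
  rw [eq_top_iff, ← (stdBasis ℂ (Fin D) (Fin D)).span_eq, Submodule.span_le]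
  rintro _ ⟨⟨i, j⟩, rfl⟩
  rw [stdBasis_eq_single]
  exact hsingle i j

end ShiftAndCorner

theorem stmt18 (D : ℕ) (hD : 2 < D) (A : Fin 2 → Matrix (Fin D) (Fin D) ℂ)
    (hA0 : A 0 = Matrix.of fun i j : Fin D => if (i : ℕ) = ((j : ℕ) + 1) % D then 1 else 0)
    (hA1 : A 1 = single (⟨1, by omega⟩ : Fin D) (⟨D - 1, by omega⟩ : Fin D) 1) :
    Module.finrank ℂ (krausSpan A (D * (D - 1) - 1)) ≤ D ^ 2 - 1
    ∧ krausSpan A (D * (D - 1)) = ⊤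
    ∧ iIndex A = D ^ 2 - D := by
  have : NeZero D := ⟨by omega⟩
  have hP : A 0 = cyclicShift D := by
    rw [hA0]
    ext i j
    simp [cyclicShift, Fin.ext_iff, Fin.val_add, Nat.mod_eq_of_lt (show 1 < D by omega)]
  have hR : A 1 = single 1 (-1) 1 := by
    rw [hA1, ← Fin.natCast_pred_self]
    congr 1 <;> ext <;>
      simp [Nat.mod_eq_of_lt (show 1 < D by omega), Nat.mod_eq_of_lt (show D - 1 < D by omega)]
  have hN : D * (D - 1) - 1 + 1 = D * (D - 1) :=
    Nat.sub_add_cancel (Nat.mul_pos (by omega) (by omega))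
  have hne := krausSpan_ne_top hP hR hN
  have htop := krausSpan_eq_top hP hR hD.le
  refine ⟨?_, htop, ?_⟩
  · have := Submodule.finrank_lt hne
    rw [Module.finrank_matrix, Module.finrank_self, Fintype.card_fin, ← sq] at this
    omega
  · rw [iIndex_eq_succ (hP ▸ isUnit_cyclicShift) (hN ▸ htop) hne, hN, Nat.mul_sub_one, sq]
end
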